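/- (Cantor Intersection Theorem for PM spaces) A probabilistic metric space (S, 𝓕, τ) under a continuous triangle function τ is complete if and only if for every nested sequence {S_n} (S₁ ⊇ S₂ ⊇ S₃ ⊇ …) of nonempty subsets of S that are closed in the strong topology and satisfy D_{S_n} → H₀ pointwise as n → ∞, the intersection ⋂_{n=1}^∞ S_n consists of exactly one point. -/

import Mathlib

open Set Filter Topology

/-- A distance distribution function: nondecreasing, left-continuous,
with values in `[0,1]`, and vanishing on `(-∞, 0]`. -/
def IsDDF (F : ℝ → ℝ) : Prop :=
  Monotone F ∧ (∀ x : ℝ, ContinuousWithinAt F (Set.Iio x) x) ∧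
    (∀ x, 0 ≤ F x ∧ F x ≤ 1) ∧ ∀ x ≤ 0, F x = 0

/-- The condition `(F, G; h)` in the definition of the modified Lévy distance. -/
def LevyCond (F G : ℝ → ℝ) (h : ℝ) : Prop :=
  ∀ x ∈ Set.Ioo (-(1 / h)) (1 / h), F (x - h) - h ≤ G x ∧ G x ≤ F (x + h) + h

/-- The modified Lévy distance on `Δ⁺`. -/
noncomputable def dL (F G : ℝ → ℝ) : ℝ :=
  sInf {h : ℝ | h ∈ Set.Ioc (0 : ℝ) 1 ∧ LevyCond F G h ∧ LevyCond G F h}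

/-- The distribution function `H₀`, equal to `0` on `(-∞, 0]` and `1` on `(0, ∞)`. -/
noncomputable def H0 : ℝ → ℝ := fun x => if x ≤ 0 then 0 else 1

/-- A triangle function: a binary operation on `Δ⁺` that is commutative, associative,
nondecreasing in each argument, and has `H₀` as identity. -/
def IsTriangleFunction (τ : (ℝ → ℝ) → (ℝ → ℝ) → (ℝ → ℝ)) : Prop :=
  (∀ F G, IsDDF F → IsDDF G → IsDDF (τ F G)) ∧
  (∀ F G, IsDDF F → IsDDF G → τ F G = τ G F) ∧
  (∀ F G K, IsDDF F → IsDDF G → IsDDF K → τ (τ F G) K = τ F (τ G K)) ∧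
  (∀ F G K, IsDDF F → IsDDF G → IsDDF K → F ≤ G → τ F K ≤ τ G K) ∧
  (∀ F, IsDDF F → τ H0 F = F)

/-- Continuity of a triangle function with respect to the modified Lévy metric on `Δ⁺`
(sequential continuity, which is equivalent since `d_L` is a metric). -/
def ContinuousTF (τ : (ℝ → ℝ) → (ℝ → ℝ) → (ℝ → ℝ)) : Prop :=
  ∀ (F G : ℕ → ℝ → ℝ) (F₀ G₀ : ℝ → ℝ),
    (∀ n, IsDDF (F n)) → (∀ n, IsDDF (G n)) → IsDDF F₀ → IsDDF G₀ →
    Filter.Tendsto (fun n => dL (F n) F₀) Filter.atTop (nhds 0) →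
    Filter.Tendsto (fun n => dL (G n) G₀) Filter.atTop (nhds 0) →
    Filter.Tendsto (fun n => dL (τ (F n) (G n)) (τ F₀ G₀)) Filter.atTop (nhds 0)

/-- `(S, 𝓕, τ)` is a probabilistic metric space. -/
structure IsPMSpace {S : Type*} (𝓕 : S → S → ℝ → ℝ)
    (τ : (ℝ → ℝ) → (ℝ → ℝ) → (ℝ → ℝ)) : Prop where
  ddf : ∀ p q, IsDDF (𝓕 p q)
  tf : IsTriangleFunction τ
  refl : ∀ p, 𝓕 p p = H0
  ne : ∀ p q, p ≠ q → 𝓕 p q ≠ H0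
  symm : ∀ p q, 𝓕 p q = 𝓕 q p
  tri : ∀ p q r, τ (𝓕 p q) (𝓕 q r) ≤ 𝓕 p r

/-- The strong neighborhood `N_p(t) = {q : F_{p,q}(t) > 1 - t}`. -/
def Npt {S : Type*} (𝓕 : S → S → ℝ → ℝ) (p : S) (t : ℝ) : Set S :=
  {q | 1 - t < 𝓕 p q t}

/-- A set is open in the strong topology iff it contains a strong neighborhood
of each of its points. -/
def StrongOpen {S : Type*} (𝓕 : S → S → ℝ → ℝ) (U : Set S) : Prop :=
  ∀ p ∈ U, ∃ t > 0, Npt 𝓕 p t ⊆ U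

/-- A set is closed in the strong topology iff its complement is open. -/
def StrongClosed {S : Type*} (𝓕 : S → S → ℝ → ℝ) (A : Set S) : Prop :=
  StrongOpen 𝓕 Aᶜ

/-- Convergence of a sequence in a PM space (the `(ε, λ)`-sense). -/
def PMConv {S : Type*} (𝓕 : S → S → ℝ → ℝ) (p : ℕ → S) (p₀ : S) : Prop :=
  ∀ ε > (0 : ℝ), ∀ lam ∈ Set.Ioo (0 : ℝ) 1, ∃ n₀ : ℕ, ∀ n ≥ n₀, 1 - lam < 𝓕 (p n) p₀ ε

/-- Cauchy sequences in a PM space. -/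
def PMCauchy {S : Type*} (𝓕 : S → S → ℝ → ℝ) (p : ℕ → S) : Prop :=
  ∀ ε > (0 : ℝ), ∀ lam ∈ Set.Ioo (0 : ℝ) 1, ∃ n₀ : ℕ, ∀ n ≥ n₀, ∀ m ≥ n₀,
    1 - lam < 𝓕 (p n) (p m) ε

/-- A PM space is complete if every Cauchy sequence converges. -/
def PMComplete {S : Type*} (𝓕 : S → S → ℝ → ℝ) : Prop :=
  ∀ p : ℕ → S, PMCauchy 𝓕 p → ∃ p₀, PMConv 𝓕 p p₀

/-- The probabilistic diameter of a set: `D_A(x) = sup_{t<x} inf_{p,q ∈ A} F_{p,q}(t)`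
for `x > 0`, and `0` for `x ≤ 0`. -/
noncomputable def probDiam {S : Type*} (𝓕 : S → S → ℝ → ℝ) (A : Set S) (x : ℝ) : ℝ :=
  if x ≤ 0 then 0
  else sSup ((fun t => sInf ((fun pq : S × S => 𝓕 pq.1 pq.2 t) '' (A ×ˢ A))) '' Set.Iio x)

/-! Continuity of `τ` at `(H₀, H₀)` yields a uniform triangle inequality for strong
neighbourhoods: `q ∈ N_p(η)` and `r ∈ N_q(η)` give `r ∈ N_p(t)`. Hence taking strong closures
keeps small sets small, so the closures of the tails of a Cauchy sequence form a nested family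
as in the theorem, and its unique common point is the limit of the sequence. Conversely, points
chosen from the `Sₙ` form a Cauchy sequence whose limit lies in every closed `Sₙ`, and two common
points `p, q` satisfy `F_{p,q} ≥ D_{Sₙ} → H₀`, so they coincide. -/

lemma H0_of_nonpos {x : ℝ} (hx : x ≤ 0) : H0 x = 0 := if_pos hx

lemma H0_of_pos {x : ℝ} (hx : 0 < x) : H0 x = 1 := if_neg (not_le.2 hx)

lemma H0_isDDF : IsDDF H0 := by
  refine ⟨fun a b hab => ?_, fun x => ?_, fun x => ?_, fun x => H0_of_nonpos⟩
  · unfold H0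
    split_ifs <;> linarith
  · have hconst : ∀ᶠ y in 𝓝[<] x, H0 x = H0 y := by
      rcases le_or_gt x 0 with hx | hx
      · filter_upwards [self_mem_nhdsWithin] with y hy
        rw [H0_of_nonpos hx, H0_of_nonpos (hy.trans_le hx).le]
      · filter_upwards [Ioo_mem_nhdsLT hx] with y hy
        rw [H0_of_pos hx, H0_of_pos hy.1]
    exact tendsto_const_nhds.congr' hconst
  · unfold H0
    split_ifs <;> norm_num

lemma IsDDF.eq_H0_of_forall_one_sub_lt {F : ℝ → ℝ} (hF : IsDDF F)
    (h : ∀ t > 0, 1 - t < F t) : F = H0 := by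
  funext x
  rcases le_or_gt x 0 with hx | hx
  · rw [hF.2.2.2 x hx, H0_of_nonpos hx]
  · rw [H0_of_pos hx]
    refine le_antisymm (hF.2.2.1 x).2 (le_of_forall_pos_le_add fun ε hε => ?_)
    have h₁ := h _ (lt_min hε hx)
    have h₂ := hF.1 (min_le_right ε x)
    linarith [min_le_left ε x]

lemma levyCond_one {F G : ℝ → ℝ} (hF : IsDDF F) (hG : IsDDF G) : LevyCond F G 1 := by
  intro x _
  constructor
  · linarith [(hF.2.2.1 (x - 1)).2, (hG.2.2.1 x).1]
  · linarith [(hF.2.2.1 (x + 1)).1, (hG.2.2.1 x).2]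

lemma dL_nonneg (F G : ℝ → ℝ) : 0 ≤ dL F G :=
  Real.sInf_nonneg fun _ hh => hh.1.1.le

lemma levyCond_H0_of_one_sub_lt {F : ℝ → ℝ} (hF : IsDDF F) {η : ℝ} (hη : 0 < η)
    (h : 1 - η < F η) : LevyCond F H0 η ∧ LevyCond H0 F η := by
  have hF₀ (x) : 0 ≤ F x := (hF.2.2.1 x).1
  have hF₁ (x) : F x ≤ 1 := (hF.2.2.1 x).2
  refine ⟨fun x _ => ⟨?_, ?_⟩, fun x _ => ⟨?_, ?_⟩⟩
  · rcases le_or_gt x 0 with hx | hx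
    · rw [hF.2.2.2 _ (by linarith), H0_of_nonpos hx]
      linarith
    · rw [H0_of_pos hx]
      linarith [hF₁ (x - η)]
  · rcases le_or_gt x 0 with hx | hx
    · rw [H0_of_nonpos hx]
      linarith [hF₀ (x + η)]
    · rw [H0_of_pos hx]
      linarith [hF.1 (show η ≤ x + η by linarith)]
  · rcases le_or_gt (x - η) 0 with hx | hx
    · rw [H0_of_nonpos hx]
      linarith [hF₀ x]
    · rw [H0_of_pos hx]
      linarith [hF.1 (show η ≤ x by linarith)]
  · rcases le_or_gt (x + η) 0 with hx | hx
    · rw [hF.2.2.2 _ (by linarith)]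
      unfold H0
      split_ifs <;> linarith
    · rw [H0_of_pos hx]
      linarith [hF₁ x]

lemma dL_H0_le_of_one_sub_lt {F : ℝ → ℝ} (hF : IsDDF F) {η : ℝ} (hη₀ : 0 < η) (hη₁ : η ≤ 1)
    (h : 1 - η < F η) : dL F H0 ≤ η :=
  csInf_le ⟨0, fun _ hh => hh.1.1.le⟩ ⟨⟨hη₀, hη₁⟩, levyCond_H0_of_one_sub_lt hF hη₀ h⟩

lemma one_sub_lt_of_dL_H0_lt {F : ℝ → ℝ} (hF : IsDDF F) {h : ℝ} (hh : h ≤ 1)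
    (hd : dL F H0 < h) : 1 - h < F h := by
  have hne : {h : ℝ | h ∈ Ioc 0 1 ∧ LevyCond F H0 h ∧ LevyCond H0 F h}.Nonempty :=
    ⟨1, ⟨zero_lt_one, le_rfl⟩, levyCond_one hF H0_isDDF, levyCond_one H0_isDDF hF⟩
  obtain ⟨h', ⟨⟨hh'₀, -⟩, -, hcond⟩, hh'⟩ := exists_lt_of_csInf_lt hne hd
  have hmem : h ∈ Ioo (-(1 / h')) (1 / h') := by
    refine ⟨by linarith [one_div_pos.2 hh'₀], ?_⟩
    rw [lt_div_iff₀ hh'₀]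
    nlinarith
  have hlevy := (hcond h hmem).1
  rw [H0_of_pos (by linarith)] at hlevy
  linarith [hF.1 (show h - h' ≤ h by linarith)]

section

variable {S : Type*} {𝓕 : S → S → ℝ → ℝ} {τ : (ℝ → ℝ) → (ℝ → ℝ) → (ℝ → ℝ)}

lemma ContinuousTF.exists_one_sub_lt (htf : IsTriangleFunction τ) (hτ : ContinuousTF τ) {t : ℝ}
    (ht : 0 < t) :
    ∃ η ∈ Ioo (0 : ℝ) 1, ∀ F G, IsDDF F → IsDDF G →
      1 - η < F η → 1 - η < G η → 1 - t < τ F G t := by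
  -- Counterexamples `F n, G n` for `η = η n` tend to `H₀` in `d_L`, so `τ (F n) (G n)` must tend
  -- to `τ H₀ H₀ = H₀`, which is incompatible with `τ (F n) (G n) t ≤ 1 - t`.
  by_contra! hcon
  set η : ℕ → ℝ := fun n => ((n : ℝ) + 1)⁻¹ / 2
  have hη (n : ℕ) : η n ∈ Ioo (0 : ℝ) 1 := by
    have : ((n : ℝ) + 1)⁻¹ ≤ 1 := inv_le_one_of_one_le₀ (by linarith [n.cast_nonneg (α := ℝ)])
    exact ⟨by positivity, by simp only [η]; linarith⟩
  have hη_lim : Tendsto η atTop (𝓝 0) := by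
    simpa using tendsto_one_div_add_atTop_nhds_zero_nat.div_const (2 : ℝ)
  choose F G hF hG hFη hGη hτFG using fun n => hcon (η n) (hη n)
  have hdL {K : ℕ → ℝ → ℝ} (hK : ∀ n, IsDDF (K n)) (hKη : ∀ n, 1 - η n < K n (η n)) :
      Tendsto (fun n => dL (K n) H0) atTop (𝓝 0) :=
    squeeze_zero (fun n => dL_nonneg _ _)
      (fun n => dL_H0_le_of_one_sub_lt (hK n) (hη n).1 (hη n).2.le (hKη n)) hη_lim
  have hlim := hτ F G H0 H0 hF hG H0_isDDF H0_isDDF (hdL hF hFη) (hdL hG hGη)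
  rw [htf.2.2.2.2 H0 H0_isDDF] at hlim
  obtain ⟨n, hn⟩ := (hlim.eventually (eventually_lt_nhds (lt_min ht one_pos))).exists
  have hsmall := one_sub_lt_of_dL_H0_lt (htf.1 _ _ (hF n) (hG n)) (min_le_right t 1) hn
  linarith [hτFG n, (htf.1 _ _ (hF n) (hG n)).1 (min_le_left t 1), min_le_left t 1]

namespace IsPMSpace

lemma Npt_mono (hPM : IsPMSpace 𝓕 τ) (p : S) {s t : ℝ} (hst : s ≤ t) :
    Npt 𝓕 p s ⊆ Npt 𝓕 p t := fun q (hq : 1 - s < 𝓕 p q s) =>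
  show 1 - t < 𝓕 p q t by linarith [(hPM.ddf p q).1 hst]

lemma mem_Npt_comm (hPM : IsPMSpace 𝓕 τ) {p q : S} {t : ℝ} :
    q ∈ Npt 𝓕 p t ↔ p ∈ Npt 𝓕 q t := by
  simp only [Npt, mem_ofPred_eq, hPM.symm p q]

lemma mem_Npt_self (hPM : IsPMSpace 𝓕 τ) (p : S) {t : ℝ} (ht : 0 < t) : p ∈ Npt 𝓕 p t :=
  show 1 - t < 𝓕 p p t by rw [hPM.refl, H0_of_pos ht]; linarith

lemma one_sub_lt_of_mem_Npt_min (hPM : IsPMSpace 𝓕 τ) {p q : S} {ε lam : ℝ}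
    (hq : q ∈ Npt 𝓕 p (min ε lam)) : 1 - lam < 𝓕 p q ε := by
  have hq' : 1 - min ε lam < 𝓕 p q (min ε lam) := hq
  linarith [(hPM.ddf p q).1 (min_le_left ε lam), min_le_right ε lam]

lemma exists_Npt_trans (hPM : IsPMSpace 𝓕 τ) (hτ : ContinuousTF τ) {t : ℝ} (ht : 0 < t) :
    ∃ η ∈ Ioo (0 : ℝ) 1, ∀ p q r, q ∈ Npt 𝓕 p η → r ∈ Npt 𝓕 q η → r ∈ Npt 𝓕 p t := by
  obtain ⟨η, hη, hτη⟩ := hτ.exists_one_sub_lt hPM.tf ht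
  refine ⟨η, hη, fun p q r hq hr => ?_⟩
  have := hτη _ _ (hPM.ddf p q) (hPM.ddf q r) hq hr
  exact show 1 - t < 𝓕 p r t by linarith [hPM.tri p q r t]

lemma eq_of_forall_mem_Npt (hPM : IsPMSpace 𝓕 τ) {p q : S} (h : ∀ t > 0, q ∈ Npt 𝓕 p t) :
    p = q :=
  by_contra fun hpq => hPM.ne p q hpq ((hPM.ddf p q).eq_H0_of_forall_one_sub_lt h)

lemma pmConv_iff (hPM : IsPMSpace 𝓕 τ) {p : ℕ → S} {p₀ : S} :
    PMConv 𝓕 p p₀ ↔ ∀ t > 0, ∀ᶠ n in atTop, p n ∈ Npt 𝓕 p₀ t := by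
  constructor
  · intro hp t ht
    obtain ⟨n₀, hn₀⟩ := hp t ht (min t (1 / 2)) ⟨lt_min ht one_half_pos,
      (min_le_right _ _).trans_lt one_half_lt_one⟩
    filter_upwards [eventually_ge_atTop n₀] with n hn
    refine hPM.mem_Npt_comm.1 (show 1 - t < 𝓕 (p n) p₀ t from ?_)
    linarith [hn₀ n hn, min_le_left t (1 / 2)]
  · intro hp ε hε lam hlam
    obtain ⟨n₀, hn₀⟩ := eventually_atTop.1 (hp _ (lt_min hε hlam.1))
    exact ⟨n₀, fun n hn => hPM.one_sub_lt_of_mem_Npt_min (hPM.mem_Npt_comm.1 (hn₀ n hn))⟩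

end IsPMSpace

def strongClosure (𝓕 : S → S → ℝ → ℝ) (A : Set S) : Set S :=
  {p | ∀ t > 0, ∃ a ∈ A, a ∈ Npt 𝓕 p t}

lemma subset_strongClosure (hPM : IsPMSpace 𝓕 τ) (A : Set S) : A ⊆ strongClosure 𝓕 A :=
  fun a ha _ ht => ⟨a, ha, hPM.mem_Npt_self a ht⟩

lemma strongClosure_mono {A B : Set S} (h : A ⊆ B) : strongClosure 𝓕 A ⊆ strongClosure 𝓕 B :=
  fun _ hp t ht => (hp t ht).imp fun _ ha => ⟨h ha.1, ha.2⟩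

lemma StrongClosed.strongClosure_subset {A : Set S} (hA : StrongClosed 𝓕 A) :
    strongClosure 𝓕 A ⊆ A := by
  intro p hp
  by_contra hpA
  obtain ⟨t, ht, hsub⟩ := hA p hpA
  obtain ⟨a, ha, hpa⟩ := hp t ht
  exact hsub hpa ha

lemma strongClosed_strongClosure (hPM : IsPMSpace 𝓕 τ) (hτ : ContinuousTF τ) (A : Set S) :
    StrongClosed 𝓕 (strongClosure 𝓕 A) := by
  intro p hp
  simp only [strongClosure, mem_compl_iff, mem_ofPred_eq, not_forall, not_exists,
    not_and] at hp
  obtain ⟨t, ht, hA⟩ := hp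
  obtain ⟨η, hη, htrans⟩ := hPM.exists_Npt_trans hτ ht
  refine ⟨η, hη.1, fun q hq hqA => ?_⟩
  obtain ⟨a, ha, hqa⟩ := hqA η hη.1
  exact hA a ha (htrans p q a hq hqa)

lemma IsPMSpace.mem_strongClosure_of_pmConv (hPM : IsPMSpace 𝓕 τ) {A : Set S} {p : ℕ → S}
    {p₀ : S} (hp : PMConv 𝓕 p p₀) (hpA : ∀ᶠ n in atTop, p n ∈ A) :
    p₀ ∈ strongClosure 𝓕 A := fun t ht =>
  let ⟨n, hn, hnA⟩ := ((hPM.pmConv_iff.1 hp t ht).and hpA).exists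
  ⟨p n, hnA, hn⟩

/-- The `Npt`-form of `D_{A n} → H₀`, see `tendsto_probDiam_iff_stronglyShrinking`. -/
def StronglyShrinking (𝓕 : S → S → ℝ → ℝ) (A : ℕ → Set S) : Prop :=
  ∀ t > 0, ∀ᶠ n in atTop, ∀ a ∈ A n, ∀ b ∈ A n, b ∈ Npt 𝓕 a t

lemma StronglyShrinking.mono {A B : ℕ → Set S} (hA : StronglyShrinking 𝓕 A)
    (hBA : ∀ n, B n ⊆ A n) : StronglyShrinking 𝓕 B := fun t ht =>
  (hA t ht).mono fun n hn a ha b hb => hn a (hBA n ha) b (hBA n hb)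

lemma StronglyShrinking.subsingleton_iInter {A : ℕ → Set S} (hPM : IsPMSpace 𝓕 τ)
    (hA : StronglyShrinking 𝓕 A) : (⋂ n, A n).Subsingleton := fun a ha b hb =>
  hPM.eq_of_forall_mem_Npt fun t ht =>
    (hA t ht).exists.elim fun n hn => hn a (mem_iInter.1 ha n) b (mem_iInter.1 hb n)

lemma StronglyShrinking.strongClosure {A : ℕ → Set S} (hPM : IsPMSpace 𝓕 τ)
    (hτ : ContinuousTF τ) (hA : StronglyShrinking 𝓕 A) :
    StronglyShrinking 𝓕 fun n => strongClosure 𝓕 (A n) := by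
  intro t ht
  obtain ⟨η₁, hη₁, htrans₁⟩ := hPM.exists_Npt_trans hτ ht
  obtain ⟨η₂, hη₂, htrans₂⟩ := hPM.exists_Npt_trans hτ hη₁.1
  have hη : 0 < min η₁ η₂ := lt_min hη₁.1 hη₂.1
  filter_upwards [hA _ hη] with n hn q hq r hr
  obtain ⟨a, ha, hqa⟩ := hq _ hη
  obtain ⟨b, hb, hrb⟩ := hr _ hη
  have hab := hPM.Npt_mono a (min_le_right _ _) (hn a ha b hb)
  have hbr := hPM.Npt_mono b (min_le_right _ _) (hPM.mem_Npt_comm.1 hrb)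
  exact htrans₁ q a r (hPM.Npt_mono q (min_le_left _ _) hqa) (htrans₂ a b r hab hbr)

lemma IsPMSpace.pmCauchy_iff (hPM : IsPMSpace 𝓕 τ) {p : ℕ → S} :
    PMCauchy 𝓕 p ↔ StronglyShrinking 𝓕 fun n => p '' Ici n := by
  constructor
  · intro hp t ht
    obtain ⟨n₀, hn₀⟩ := hp t ht (min t (1 / 2)) ⟨lt_min ht one_half_pos,
      (min_le_right _ _).trans_lt one_half_lt_one⟩
    filter_upwards [eventually_ge_atTop n₀]
    rintro n hn _ ⟨i, hi, rfl⟩ _ ⟨j, hj, rfl⟩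
    exact show 1 - t < 𝓕 (p i) (p j) t by
      linarith [hn₀ i (hn.trans hi) j (hn.trans hj), min_le_left t (1 / 2)]
  · intro hp ε hε lam hlam
    obtain ⟨n₀, hn₀⟩ := (hp _ (lt_min hε hlam.1)).exists
    exact ⟨n₀, fun n hn m hm =>
      hPM.one_sub_lt_of_mem_Npt_min
        (hn₀ (p n) (mem_image_of_mem p hn) (p m) (mem_image_of_mem p hm))⟩

lemma bddBelow_image_ddf (hd : ∀ p q, IsDDF (𝓕 p q)) (P : Set (S × S)) (t : ℝ) :
    BddBelow ((fun pq : S × S => 𝓕 pq.1 pq.2 t) '' P) :=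
  ⟨0, by rintro _ ⟨⟨p, q⟩, -, rfl⟩; exact ((hd p q).2.2.1 t).1⟩

lemma probDiam_le (hd : ∀ p q, IsDDF (𝓕 p q)) {A : Set S} {a b : S} (ha : a ∈ A) (hb : b ∈ A)
    (x : ℝ) : probDiam 𝓕 A x ≤ 𝓕 a b x := by
  unfold probDiam
  split_ifs with hx
  · exact ((hd a b).2.2.1 x).1
  · refine Real.sSup_le ?_ ((hd a b).2.2.1 x).1
    rintro _ ⟨t, ht, rfl⟩
    calc sInf ((fun pq : S × S => 𝓕 pq.1 pq.2 t) '' (A ×ˢ A)) ≤ 𝓕 a b t :=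
          csInf_le (bddBelow_image_ddf hd _ t) ⟨(a, b), ⟨ha, hb⟩, rfl⟩
      _ ≤ 𝓕 a b x := (hd a b).1 ht.le

lemma le_probDiam (hd : ∀ p q, IsDDF (𝓕 p q)) {A : Set S} (hA : A.Nonempty) {x c t : ℝ}
    (hx : 0 < x) (ht : t < x) (h : ∀ a ∈ A, ∀ b ∈ A, c ≤ 𝓕 a b t) : c ≤ probDiam 𝓕 A x := by
  obtain ⟨a₀, ha₀⟩ := hA
  rw [probDiam, if_neg (not_le.2 hx)]
  refine (le_csInf ((Set.Nonempty.prod ⟨a₀, ha₀⟩ ⟨a₀, ha₀⟩).image _) ?_).trans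
    (le_csSup ⟨1, ?_⟩ (mem_image_of_mem _ ht))
  · rintro _ ⟨⟨p, q⟩, ⟨hp, hq⟩, rfl⟩
    exact h p hp q hq
  · rintro _ ⟨s, -, rfl⟩
    exact csInf_le_of_le (bddBelow_image_ddf hd _ s) ⟨(a₀, a₀), ⟨ha₀, ha₀⟩, rfl⟩
      ((hd a₀ a₀).2.2.1 s).2

lemma tendsto_probDiam_iff_stronglyShrinking (hd : ∀ p q, IsDDF (𝓕 p q)) {A : ℕ → Set S}
    (hA : ∀ n, (A n).Nonempty) :
    (∀ x, Tendsto (fun n => probDiam 𝓕 (A n) x) atTop (𝓝 (H0 x))) ↔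
      StronglyShrinking 𝓕 A := by
  constructor
  · intro h t ht
    have hlt : 1 - t < H0 t := by rw [H0_of_pos ht]; linarith
    filter_upwards [(h t).eventually (eventually_gt_nhds hlt)] with n hn a ha b hb
    exact hn.trans_le (probDiam_le hd ha hb t)
  · intro h x
    rcases le_or_gt x 0 with hx | hx
    · simp only [probDiam, H0, if_pos hx]
      exact tendsto_const_nhds
    rw [H0_of_pos hx]
    refine tendsto_order.2 ⟨fun c hc => ?_, fun c hc => Eventually.of_forall fun n => ?_⟩
    · have ht : 0 < min (x / 2) ((1 - c) / 2) := lt_min (by linarith) (by linarith)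
      filter_upwards [h _ ht] with n hn
      refine lt_of_lt_of_le ?_ (le_probDiam hd (hA n) hx
        ((min_le_left _ _).trans_lt (half_lt_self hx)) fun a ha b hb => (hn a ha b hb).le)
      linarith [min_le_right (x / 2) ((1 - c) / 2)]
    · obtain ⟨a, ha⟩ := hA n
      exact ((probDiam_le hd ha ha x).trans ((hd a a).2.2.1 x).2).trans_lt hc

end

theorem cantor_intersection_general {S : Type*}
    (𝓕 : S → S → ℝ → ℝ) (τ : (ℝ → ℝ) → (ℝ → ℝ) → (ℝ → ℝ))
    (hPM : IsPMSpace 𝓕 τ) (hτ : ContinuousTF τ) :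
    PMComplete 𝓕 ↔
      ∀ Sn : ℕ → Set S, (∀ n, (Sn n).Nonempty) → (∀ n, StrongClosed 𝓕 (Sn n)) →
        Antitone Sn →
        (∀ x : ℝ, Filter.Tendsto (fun n => probDiam 𝓕 (Sn n) x)
          Filter.atTop (nhds (H0 x))) →
        ∃ p : S, (⋂ n, Sn n) = {p} := by
  constructor
  · intro hcomp Sn hne hcl hanti hdiam
    have hshrink := (tendsto_probDiam_iff_stronglyShrinking hPM.ddf hne).1 hdiam
    choose q hq using hne
    have hqS (n : ℕ) : ∀ m ≥ n, q m ∈ Sn n := fun m hm => hanti hm (hq m)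
    obtain ⟨p₀, hp₀⟩ := hcomp q <| hPM.pmCauchy_iff.2 <|
      hshrink.mono fun n => image_subset_iff.2 (hqS n)
    have hp₀S (n : ℕ) : p₀ ∈ Sn n := (hcl n).strongClosure_subset <|
      hPM.mem_strongClosure_of_pmConv hp₀ (eventually_atTop.2 ⟨n, hqS n⟩)
    exact ⟨p₀, (hshrink.subsingleton_iInter hPM).eq_singleton_of_mem (mem_iInter.2 hp₀S)⟩
  · intro hcantor p hp
    set T : ℕ → Set S := fun n => strongClosure 𝓕 (p '' Ici n)
    have hpT (n : ℕ) : p n ∈ T n :=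
      subset_strongClosure hPM _ (mem_image_of_mem p (mem_Ici.2 le_rfl))
    have hshrink : StronglyShrinking 𝓕 T := (hPM.pmCauchy_iff.1 hp).strongClosure hPM hτ
    obtain ⟨p₀, hp₀⟩ := hcantor T (fun n => ⟨p n, hpT n⟩)
      (fun n => strongClosed_strongClosure hPM hτ _)
      (fun n m hnm => strongClosure_mono (image_mono (Ici_subset_Ici.2 hnm)))
      ((tendsto_probDiam_iff_stronglyShrinking hPM.ddf fun n => ⟨p n, hpT n⟩).2 hshrink)
    have hp₀T (n : ℕ) : p₀ ∈ T n := mem_iInter.1 (hp₀ ▸ mem_singleton p₀) n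
    exact ⟨p₀, hPM.pmConv_iff.2 fun t ht =>
      (hshrink t ht).mono fun n hn => hn p₀ (hp₀T n) (p n) (hpT n)⟩

/-- **Cantor Intersection Theorem.** A PM space with continuous triangle
function is complete iff every nested sequence of nonempty strongly closed sets whose
probabilistic diameters tend pointwise to `H₀` has intersection consisting of exactly
one point. -/
theorem cantor_intersection {S : Type*} [Nonempty S]
    (𝓕 : S → S → ℝ → ℝ) (τ : (ℝ → ℝ) → (ℝ → ℝ) → (ℝ → ℝ))
    (hPM : IsPMSpace 𝓕 τ) (hτ : ContinuousTF τ) :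
    PMComplete 𝓕 ↔
      ∀ Sn : ℕ → Set S, (∀ n, (Sn n).Nonempty) → (∀ n, StrongClosed 𝓕 (Sn n)) →
        Antitone Sn →
        (∀ x : ℝ, Filter.Tendsto (fun n => probDiam 𝓕 (Sn n) x)
          Filter.atTop (nhds (H0 x))) →
        ∃ p : S, (⋂ n, Sn n) = {p} :=
  cantor_intersection_general 𝓕 τ hPM hτ
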